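/- arXiv:1408.3992 — 3 statements merged into one kernel-verified Lean document; each statement's English description precedes it below -/
import Mathlib

section
/- For the rational functions f_a: (i) f_0(z) + f_0(z/(z−1)) = −2 as an identity in ℚ(z), where f_a(z/(z−1)) denotes the composition of f_a with the rational function z/(z−1); (ii) for every integer a ≥ 1, f_a(z) + f_a(z/(z−1)) = 0 in ℚ(z); and (iii) for every integer a ≥ 1, f_a(0) = 0 (i.e., the rational function f_a is defined at 0 with value 0). -/
open scoped Polynomial

/-- The formal derivative of a rational function, computed via the quotient rule on the
reduced numerator/denominator representation. -/
noncomputable def ratFuncDeriv (f : RatFunc ℚ) : RatFunc ℚ :=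
  algebraMap (Polynomial ℚ) (RatFunc ℚ)
      (Polynomial.derivative f.num * f.denom - f.num * Polynomial.derivative f.denom) /
    algebraMap (Polynomial ℚ) (RatFunc ℚ) (f.denom ^ 2)

/-- The rational functions `f_a ∈ ℚ(z)`, defined by `f_0(z) = -2(z-1)/(z-2)` and
`f_{a+1}(z) = -(z(z-1)/(z-2)) · f_a′(z)`. -/
noncomputable def fA : ℕ → RatFunc ℚ
  | 0 => -2 * (RatFunc.X - 1) / (RatFunc.X - 2)
  | a + 1 => -(RatFunc.X * (RatFunc.X - 1) / (RatFunc.X - 2)) * ratFuncDeriv (fA a)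

namespace FASym

open Polynomial

local notation "am" => algebraMap ℚ[X] (RatFunc ℚ)
local notation "ph" => Polynomial.eval₂RingHom (algebraMap ℚ (RatFunc ℚ)) (RatFunc.X / (RatFunc.X - 1))

lemma hX1 : (X - 1 : ℚ[X]) ≠ 0 := fun h => by simpa using congrArg (Polynomial.eval 0) h

lemma hX2 : (X - 2 : ℚ[X]) ≠ 0 := fun h => by simpa using congrArg (Polynomial.eval 0) h

lemma amX : am X = RatFunc.X := RatFunc.algebraMap_X

lemma hWne : (RatFunc.X - 1 : RatFunc ℚ) ≠ 0 := by
  have h : am (X - 1) = RatFunc.X - 1 := by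
    rw [map_sub, map_one, amX]
  rw [← h]
  exact RatFunc.algebraMap_ne_zero hX1

lemma e1 : (ph X : RatFunc ℚ) * (RatFunc.X - 1) = RatFunc.X := by
  have h : (ph X : RatFunc ℚ) = RatFunc.X / (RatFunc.X - 1) := by
    simp [coe_eval₂RingHom]
  rw [h, div_mul_cancel₀ _ hWne]

noncomputable def Rev (k : ℕ) (p : ℚ[X]) : ℚ[X] :=
  ∑ i ∈ Finset.range (k + 1), Polynomial.C (p.coeff i) * X ^ i * (X - 1) ^ (k - i)

lemma bridgeA (p : ℚ[X]) (k : ℕ) (h : p.natDegree ≤ k) :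
    (RatFunc.X - 1) ^ k * (ph p : RatFunc ℚ) = am (Rev k p) := by
  have h' : p.natDegree < k + 1 := Nat.lt_succ_of_le h
  show (RatFunc.X - 1) ^ k * Polynomial.eval₂ (algebraMap ℚ (RatFunc ℚ)) (RatFunc.X / (RatFunc.X - 1)) p = _
  rw [Polynomial.eval₂_eq_sum_range' _ h', Rev, map_sum, Finset.mul_sum]
  refine Finset.sum_congr rfl fun i hi => ?_
  have hik : i ≤ k := Nat.lt_succ_iff.mp (Finset.mem_range.mp hi)
  obtain ⟨j, rfl⟩ : ∃ j, k = i + j := ⟨k - i, by omega⟩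
  rw [Nat.add_sub_cancel_left]
  have hc : (algebraMap ℚ (RatFunc ℚ)) (p.coeff i) = am (C (p.coeff i)) := by
    rw [IsScalarTower.algebraMap_apply ℚ ℚ[X] (RatFunc ℚ), Polynomial.algebraMap_eq]
  have hXi : (RatFunc.X : RatFunc ℚ) ^ i
      = (RatFunc.X / (RatFunc.X - 1)) ^ i * (RatFunc.X - 1) ^ i := by
    rw [← mul_pow, div_mul_cancel₀ _ hWne]
  rw [hc]
  simp only [map_mul, map_pow, map_sub, map_one, amX]
  rw [hXi]
  ring

lemma rev_eval_one (p : ℚ[X]) (k : ℕ) :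
    Polynomial.eval 1 (Rev k p) = p.coeff k := by
  rw [Rev, Polynomial.eval_finset_sum, Finset.sum_eq_single k]
  · simp
  · intro i hi hne
    have hik : i < k := by
      have := Finset.mem_range.mp hi; omega
    have h0 : ((1 : ℚ) - 1) ^ (k - i) = 0 := by
      rw [sub_self]; exact zero_pow (by omega)
    simp [h0]
    exact Or.inr (by omega)
  · intro h
    exact absurd (Finset.self_mem_range_succ k) h

lemma phi_ne_zero {p : ℚ[X]} (hp : p ≠ 0) : (ph p : RatFunc ℚ) ≠ 0 := by
  intro h0
  have hb := bridgeA p p.natDegree le_rfl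
  rw [h0, mul_zero] at hb
  have hrev : Rev p.natDegree p = 0 :=
    RatFunc.algebraMap_injective ℚ (by rw [← hb, map_zero])
  have := rev_eval_one p p.natDegree
  rw [hrev] at this
  simp only [Polynomial.eval_zero] at this
  exact hp (Polynomial.leadingCoeff_eq_zero.mp this.symm)

lemma deriv_div (p q : ℚ[X]) (hq : q ≠ 0) :
    ratFuncDeriv (am p / am q)
      = am (derivative p * q - p * derivative q) / am (q ^ 2) := by
  set f := am p / am q with hfdef
  have h1 : f.num * q = p * f.denom := (RatFunc.num_mul_eq_mul_denom_iff hq).mpr hfdef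
  have h2 : derivative f.num * q + f.num * derivative q
      = derivative p * f.denom + p * derivative f.denom := by
    have := congrArg derivative h1
    rwa [derivative_mul, derivative_mul] at this
  rw [ratFuncDeriv,
    div_eq_div_iff (RatFunc.algebraMap_ne_zero (pow_ne_zero 2 (RatFunc.denom_ne_zero f)))
      (RatFunc.algebraMap_ne_zero (pow_ne_zero 2 hq)), ← map_mul, ← map_mul]
  refine congrArg _ ?_
  linear_combination (f.denom * q) * h2 - (derivative f.denom * q + derivative q * f.denom) * h1

lemma eval_frac (p q : ℚ[X]) (hq : q ≠ 0) :
    RatFunc.eval (algebraMap ℚ (RatFunc ℚ)) (RatFunc.X / (RatFunc.X - 1)) (am p / am q)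
      = (ph p : RatFunc ℚ) / ph q := by
  set f := am p / am q with hfdef
  have h1 : f.num * q = p * f.denom := (RatFunc.num_mul_eq_mul_denom_iff hq).mpr hfdef
  have h2 : (ph f.num : RatFunc ℚ) * ph q = ph p * ph f.denom := by
    rw [← map_mul, ← map_mul, h1]
  rw [RatFunc.eval, ← Polynomial.coe_eval₂RingHom,
    div_eq_div_iff (phi_ne_zero (RatFunc.denom_ne_zero f)) (phi_ne_zero hq)]
  linear_combination h2


lemma Rev_zero (k : ℕ) : Rev k 0 = 0 := by simp [Rev]

lemma Rev_add (k : ℕ) (p q : ℚ[X]) : Rev k (p + q) = Rev k p + Rev k q := by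
  simp [Rev, coeff_add, C_add, add_mul, Finset.sum_add_distrib]

lemma Rev_monomial (k n : ℕ) (c : ℚ) :
    Rev k (C c * X ^ n) = if n ≤ k then C c * X ^ n * (X - 1) ^ (k - n) else 0 := by
  rw [Rev]
  have h : ∀ i ∈ Finset.range (k + 1),
      C ((C c * X ^ n).coeff i) * X ^ i * (X - 1) ^ (k - i)
        = if i = n then C c * X ^ i * (X - 1) ^ (k - i) else 0 := by
    intro i _
    rcases eq_or_ne i n with rfl | hne
    · simp [coeff_C_mul, coeff_X_pow]
    · simp [coeff_C_mul, coeff_X_pow, hne]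
  rw [Finset.sum_congr rfl h, Finset.sum_ite_eq' (Finset.range (k + 1)) n]
  simp [Finset.mem_range, Nat.lt_succ_iff]

lemma Rev_derivative (m : ℕ) (p : ℚ[X]) :
    Rev m (derivative p)
      = ((m : ℚ[X]) + 1) * Rev (m + 1) p - (X - 1) * derivative (Rev (m + 1) p) := by
  induction p using Polynomial.induction_on' with
  | add p q hp hq =>
    rw [derivative_add, Rev_add, hp, hq, Rev_add, derivative_add]
    ring
  | monomial n a =>
    rw [← C_mul_X_pow_eq_monomial, derivative_C_mul_X_pow]
    rcases n with _ | n
    · rw [Rev_monomial, Rev_monomial, if_pos (by omega), if_pos (by omega)]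
      simp only [Nat.cast_zero, mul_zero, C_0, zero_mul, Nat.sub_zero, Nat.zero_sub,
        pow_zero, mul_one, one_mul, derivative_C_mul, derivative_pow, Nat.add_sub_cancel,
        derivative_sub, derivative_X, derivative_one, sub_zero, C_eq_natCast]
      push_cast
      try simp only [map_add, map_mul, map_natCast, C_1, map_one]
      ring
    · simp only [Nat.add_sub_cancel]
      rcases le_or_gt (n + 1) (m + 1) with hle | hgt
      · have hnm : n ≤ m := by omega
        rw [Rev_monomial, Rev_monomial, if_pos hnm, if_pos hle]
        have hme : m + 1 - (n + 1) = m - n := by omega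
        rw [hme]
        obtain ⟨i, rfl⟩ : ∃ i, m = n + i := ⟨m - n, by omega⟩
        rw [Nat.add_sub_cancel_left]
        rcases i with _ | i
        · simp only [pow_zero, mul_one, derivative_mul, derivative_C, zero_mul, zero_add,
            derivative_X_pow, Nat.add_sub_cancel, C_eq_natCast]
          push_cast
          try simp only [map_add, map_mul, map_natCast, C_1, map_one]
          ring
        · simp only [derivative_mul, derivative_C, zero_mul, zero_add, derivative_X_pow,
            derivative_pow, Nat.add_sub_cancel, derivative_sub, derivative_X, derivative_one,
            sub_zero, mul_one, C_eq_natCast]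
          push_cast
          try simp only [map_add, map_mul, map_natCast, C_1, map_one]
          ring
      · rw [Rev_monomial, Rev_monomial, if_neg (by omega), if_neg (by omega)]
        simp

lemma amX1 : am (X - 1) = RatFunc.X - 1 := by rw [map_sub, map_one, amX]

lemma amX2 : am (X - 2) = RatFunc.X - 2 := by rw [map_sub, map_ofNat, amX]

lemma hZ2ne : (RatFunc.X - 2 : RatFunc ℚ) ≠ 0 := by
  rw [← amX2]; exact RatFunc.algebraMap_ne_zero hX2

lemma e2' : ((ph X : RatFunc ℚ) - 1) * (RatFunc.X - 1) = 1 := by linear_combination e1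

lemma e4' : ((ph X : RatFunc ℚ) - 2) * (RatFunc.X - 1) = -(RatFunc.X - 2) := by
  linear_combination e1

lemma frac_eq {A B C D : ℚ[X]} (hB : B ≠ 0) (hD : D ≠ 0) (h : A * D = C * B) :
    (am A : RatFunc ℚ) / am B = am C / am D := by
  rw [div_eq_div_iff (RatFunc.algebraMap_ne_zero hB) (RatFunc.algebraMap_ne_zero hD),
    ← map_mul, ← map_mul, h]

lemma mulfrac (N D : ℚ[X]) :
    -(RatFunc.X * (RatFunc.X - 1) / (RatFunc.X - 2)) * ((am N : RatFunc ℚ) / am D)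
      = am (-(X * (X - 1)) * N) / am ((X - 2) * D) := by
  have h1 : -(RatFunc.X * (RatFunc.X - 1)) = (am (-(X * (X - 1))) : RatFunc ℚ) := by
    simp [map_neg, map_mul, amX1, amX]
  rw [← neg_div, div_mul_div_comm, h1,
    show (RatFunc.X - 2 : RatFunc ℚ) = am (X - 2) from amX2.symm, ← map_mul, ← map_mul]

def Inv (f : RatFunc ℚ) : Prop :=
  ∃ p : ℚ[X], ∃ m : ℕ,
    p.natDegree ≤ m + 1 ∧
    f = am p / am ((X - 2) ^ (m + 1)) ∧
    X ∣ p ∧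
    Rev (m + 1) p = (-1 : ℚ[X]) ^ m * p

lemma inv_sym (f : RatFunc ℚ) (h : Inv f) :
    f + RatFunc.eval (algebraMap ℚ (RatFunc ℚ)) (RatFunc.X / (RatFunc.X - 1)) f = 0 := by
  obtain ⟨p, m, hdeg, hf, -, hrev⟩ := h
  have hq : ((X - 2 : ℚ[X]) ^ (m + 1)) ≠ 0 := pow_ne_zero _ hX2
  rw [hf, eval_frac _ _ hq]
  have hA1 : (RatFunc.X - 1) ^ (m + 1) * (ph p : RatFunc ℚ)
      = am ((-1 : ℚ[X]) ^ m * p) := by rw [bridgeA p (m + 1) hdeg, hrev]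
  simp only [map_mul, map_pow, map_neg, map_one] at hA1
  have hq2W : (ph ((X - 2) ^ (m + 1)) : RatFunc ℚ) * (RatFunc.X - 1) ^ (m + 1)
      = (-1) ^ (m + 1) * am ((X - 2) ^ (m + 1)) := by
    rw [map_pow, map_pow, ← mul_pow]
    have : (ph (X - 2) : RatFunc ℚ) * (RatFunc.X - 1) = -(RatFunc.X - 2) := by
      rw [map_sub, map_ofNat]; exact e4'
    rw [this, ← amX2, ← neg_one_mul, mul_pow]
  have hd : (am ((X - 2) ^ (m + 1)) : RatFunc ℚ) ≠ 0 := RatFunc.algebraMap_ne_zero hq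
  have hp2 : (ph ((X - 2) ^ (m + 1)) : RatFunc ℚ) ≠ 0 := phi_ne_zero hq
  rw [div_add_div _ _ hd hp2, _root_.div_eq_zero_iff]
  left
  have hWpow : ((RatFunc.X - 1 : RatFunc ℚ)) ^ (m + 1) ≠ 0 := pow_ne_zero _ hWne
  have key : ((am p : RatFunc ℚ) * ph ((X - 2) ^ (m + 1))
      + ph p * am ((X - 2) ^ (m + 1))) * (RatFunc.X - 1) ^ (m + 1) = 0 := by
    linear_combination (am p : RatFunc ℚ) * hq2W + (am ((X - 2) ^ (m + 1)) : RatFunc ℚ) * hA1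
  rcases mul_eq_zero.mp key with h | h
  · linear_combination h
  · exact absurd h hWpow

lemma inv_eval0 (f : RatFunc ℚ) (h : Inv f) :
    Polynomial.eval (0 : ℚ) f.denom ≠ 0 ∧ Polynomial.eval (0 : ℚ) f.num = 0 := by
  obtain ⟨p, m, -, hf, hdvd, -⟩ := h
  have hq : ((X - 2 : ℚ[X]) ^ (m + 1)) ≠ 0 := pow_ne_zero _ hX2
  have hcross : f.num * ((X - 2) ^ (m + 1)) = p * f.denom :=
    (RatFunc.num_mul_eq_mul_denom_iff hq).mpr hf
  have hdd : f.denom ∣ (X - 2) ^ (m + 1) := (RatFunc.denom_dvd hq).mpr ⟨p, hf⟩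
  have hev : Polynomial.eval (0 : ℚ) ((X - 2) ^ (m + 1)) = (-2) ^ (m + 1) := by
    simp
  have hden : Polynomial.eval (0 : ℚ) f.denom ≠ 0 := by
    intro h0
    have hXd : (X : ℚ[X]) ∣ f.denom := by
      simpa using Polynomial.dvd_iff_isRoot.mpr h0
    obtain ⟨r, hr⟩ := hXd.trans hdd
    have h2 := congrArg (Polynomial.eval (0 : ℚ)) hr
    rw [hev] at h2
    simp only [Polynomial.eval_mul, Polynomial.eval_X, zero_mul] at h2
    exact pow_ne_zero _ (by norm_num : (-2 : ℚ) ≠ 0) h2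
  refine ⟨hden, ?_⟩
  have h3 := congrArg (Polynomial.eval (0 : ℚ)) hcross
  obtain ⟨r, hr⟩ := hdvd
  rw [hr] at h3
  rw [Polynomial.eval_mul, Polynomial.eval_mul, Polynomial.eval_mul, hev] at h3
  simp only [Polynomial.eval_X, zero_mul] at h3
  have := mul_eq_zero.mp h3
  rcases this with h | h
  · exact h
  · exact absurd h (pow_ne_zero _ (by norm_num))

lemma inv_step (f : RatFunc ℚ) (h : Inv f) :
    Inv (-(RatFunc.X * (RatFunc.X - 1) / (RatFunc.X - 2)) * ratFuncDeriv f) := by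
  obtain ⟨p, m, hdeg, hf, hdvd, hrev⟩ := h
  set s : ℚ[X] := ((m + 1 : ℕ) : ℚ[X]) * p - (X - 2) * derivative p with hs
  have hd1 : (derivative p).natDegree ≤ m :=
    le_trans (natDegree_derivative_le p) (by omega)
  have hdX1 : (X - 1 : ℚ[X]).natDegree ≤ 1 :=
    le_trans (natDegree_sub_le _ _) (by simp)
  have hdX2 : (X - 2 : ℚ[X]).natDegree ≤ 1 :=
    le_trans (natDegree_sub_le _ _) (by simp)
  have hds : s.natDegree ≤ m + 1 := by
    refine le_trans (natDegree_sub_le _ _) (max_le ?_ ?_)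
    · refine le_trans natDegree_mul_le ?_
      rw [Polynomial.natDegree_natCast]
      omega
    · refine le_trans natDegree_mul_le ?_
      omega
  have hdtot : (X * ((X - 1) * s)).natDegree ≤ m + 2 + 1 := by
    refine le_trans natDegree_mul_le ?_
    have := le_trans (natDegree_mul_le (p := (X - 1 : ℚ[X])) (q := s)) (by omega : (X - 1 : ℚ[X]).natDegree + s.natDegree ≤ m + 2)
    simp only [natDegree_X]
    omega
  refine ⟨X * ((X - 1) * s), m + 2, hdtot, ?_, dvd_mul_right _ _, ?_⟩
  · -- representation
    have hq : ((X - 2 : ℚ[X]) ^ (m + 1)) ≠ 0 := pow_ne_zero _ hX2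
    rw [hf, deriv_div p _ hq]
    have hdq : derivative ((X - 2 : ℚ[X]) ^ (m + 1)) = ((m + 1 : ℕ) : ℚ[X]) * (X - 2) ^ m := by
      rw [derivative_pow]
      simp [C_eq_natCast]
    rw [hdq, mulfrac]
    refine frac_eq (mul_ne_zero hX2 (pow_ne_zero _ (pow_ne_zero _ hX2))) (pow_ne_zero _ hX2) ?_
    rw [hs]
    ring
  · -- Rev condition
    have hA1 : (RatFunc.X - 1) ^ (m + 1) * (ph p : RatFunc ℚ)
        = am ((-1 : ℚ[X]) ^ m * p) := by rw [bridgeA p (m + 1) hdeg, hrev]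
    have hrevd : Rev m (derivative p)
        = (-1 : ℚ[X]) ^ m * (((m : ℚ[X]) + 1) * p - (X - 1) * derivative p) := by
      rw [Rev_derivative, hrev]
      have hdp : derivative ((-1 : ℚ[X]) ^ m * p) = (-1 : ℚ[X]) ^ m * derivative p := by
        rw [derivative_mul]
        simp [derivative_pow]
      rw [hdp]
      ring
    have hA2 : (RatFunc.X - 1) ^ m * (ph (derivative p) : RatFunc ℚ)
        = am ((-1 : ℚ[X]) ^ m * (((m : ℚ[X]) + 1) * p - (X - 1) * derivative p)) := by
      rw [bridgeA _ m hd1, hrevd]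
    apply RatFunc.algebraMap_injective ℚ
    rw [← bridgeA _ (m + 2 + 1) hdtot]
    have hexp : (ph (X * ((X - 1) * s)) : RatFunc ℚ)
        = ph X * ((ph X - 1) * (((m + 1 : ℕ) : RatFunc ℚ) * ph p
            - (ph X - 2) * ph (derivative p))) := by
      rw [hs]
      simp [map_mul, map_sub, map_natCast, map_one, map_ofNat]
    rw [hexp]
    calc (RatFunc.X - 1) ^ (m + 2 + 1)
          * (ph X * ((ph X - 1) * (((m + 1 : ℕ) : RatFunc ℚ) * ph p
              - (ph X - 2) * ph (derivative p))))
        = (ph X * (RatFunc.X - 1)) * ((ph X - 1) * (RatFunc.X - 1))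
            * (((m + 1 : ℕ) : RatFunc ℚ) * ((RatFunc.X - 1) ^ (m + 1) * ph p)
              - ((ph X - 2) * (RatFunc.X - 1)) * ((RatFunc.X - 1) ^ m * ph (derivative p))) := by
          ring
      _ = RatFunc.X * 1
            * (((m + 1 : ℕ) : RatFunc ℚ) * am ((-1 : ℚ[X]) ^ m * p)
              - (-(RatFunc.X - 2))
                * am ((-1 : ℚ[X]) ^ m * (((m : ℚ[X]) + 1) * p - (X - 1) * derivative p))) := by
          rw [e1, e2', e4', hA1, hA2]
      _ = am ((-1) ^ (m + 2) * (X * ((X - 1) * s))) := by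
          rw [hs]
          simp only [map_mul, map_sub, map_add, map_pow, map_neg, map_one, map_natCast,
            map_ofNat, amX]
          push_cast
          ring

lemma hf0 : fA 0 = am (-2 * X + 2) / am (X - 2) := by
  show -2 * (RatFunc.X - 1) / (RatFunc.X - 2) = _
  rw [show (-2 * (RatFunc.X - 1) : RatFunc ℚ) = -2 * RatFunc.X + 2 from by ring, amX2]
  congr 1
  simp [map_add, map_mul, map_neg, map_ofNat, amX]

lemma part1 :
    fA 0 + RatFunc.eval (algebraMap ℚ (RatFunc ℚ)) (RatFunc.X / (RatFunc.X - 1)) (fA 0)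
      = -2 := by
  rw [hf0, eval_frac _ _ hX2]
  have hphp : (ph (-2 * X + 2) : RatFunc ℚ) = -2 * ph X + 2 := by
    simp [map_add, map_mul, map_neg, map_ofNat]
  have hphq : (ph (X - 2) : RatFunc ℚ) = ph X - 2 := by
    simp [map_sub, map_ofNat]
  have h1 : (am (-2 * X + 2) : RatFunc ℚ) = -2 * RatFunc.X + 2 := by
    simp [map_add, map_mul, map_neg, map_ofNat, amX]
  have hd2 : (ph X - 2 : RatFunc ℚ) ≠ 0 := by
    rw [← hphq]; exact phi_ne_zero hX2
  rw [hphp, hphq, h1, amX2, div_add_div _ _ hZ2ne hd2, div_eq_iff (mul_ne_zero hZ2ne hd2)]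
  linear_combination (-2 : RatFunc ℚ) * e1

lemma inv_one : Inv (fA 1) := by
  have hdeg3 : (X * ((X - 1) * (-2)) : ℚ[X]).natDegree ≤ 2 + 1 := by
    refine le_trans natDegree_mul_le ?_
    have h2 : ((X - 1) * (-2) : ℚ[X]).natDegree ≤ 1 :=
      le_trans natDegree_mul_le (by simp [le_trans (natDegree_sub_le _ _) (by simp : max (X : ℚ[X]).natDegree (1 : ℚ[X]).natDegree ≤ 1)])
    simp only [natDegree_X]
    omega
  refine ⟨X * ((X - 1) * (-2)), 2, hdeg3, ?_, dvd_mul_right _ _, ?_⟩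
  · rw [show fA 1 = -(RatFunc.X * (RatFunc.X - 1) / (RatFunc.X - 2)) * ratFuncDeriv (fA 0)
      from rfl, hf0, deriv_div _ _ hX2, mulfrac]
    refine frac_eq (mul_ne_zero hX2 (pow_ne_zero _ hX2)) (pow_ne_zero _ hX2) ?_
    have hda : derivative (-2 * X + 2 : ℚ[X]) = -2 := by
      simp
    have hdb : derivative (X - 2 : ℚ[X]) = 1 := by
      simp
    rw [hda, hdb]
    ring
  · apply RatFunc.algebraMap_injective ℚ
    rw [← bridgeA _ (2 + 1) hdeg3]
    have hexp : (ph (X * ((X - 1) * (-2))) : RatFunc ℚ) = ph X * ((ph X - 1) * (-2)) := by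
      simp [map_mul, map_sub, map_neg, map_ofNat, map_one]
    rw [hexp]
    calc (RatFunc.X - 1) ^ (2 + 1) * (ph X * ((ph X - 1) * (-2)))
        = (ph X * (RatFunc.X - 1)) * ((ph X - 1) * (RatFunc.X - 1))
            * (-2 * (RatFunc.X - 1)) := by ring
      _ = RatFunc.X * 1 * (-2 * (RatFunc.X - 1)) := by rw [e1, e2']
      _ = am ((-1) ^ 2 * (X * ((X - 1) * (-2)))) := by
          simp only [map_mul, map_pow, map_neg, map_one, map_sub, map_ofNat, amX]
          ring

lemma inv_fA : ∀ a : ℕ, Inv (fA (a + 1)) := by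
  intro a
  induction a with
  | zero => exact inv_one
  | succ n ih => exact inv_step _ ih

end FASym

/-- (i) `f₀(z) + f₀(z/(z-1)) = -2` in `ℚ(z)`; (ii) for `a ≥ 1`,
`f_a(z) + f_a(z/(z-1)) = 0` in `ℚ(z)`; (iii) for `a ≥ 1`, `f_a` is defined at `0` with
value `0` (the denominator of `f_a` does not vanish at `0` and its numerator does).
Here composition with `z/(z-1)` is expressed by evaluating the rational function at the
element `X/(X-1)` of `ℚ(z)`. -/


theorem fA_symmetry_and_value_at_zero :
    (fA 0 + RatFunc.eval (algebraMap ℚ (RatFunc ℚ)) (RatFunc.X / (RatFunc.X - 1)) (fA 0)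
        = -2) ∧
    (∀ a : ℕ, 1 ≤ a →
      fA a + RatFunc.eval (algebraMap ℚ (RatFunc ℚ)) (RatFunc.X / (RatFunc.X - 1)) (fA a)
        = 0) ∧
    (∀ a : ℕ, 1 ≤ a →
      Polynomial.eval (0 : ℚ) (fA a).denom ≠ 0 ∧ Polynomial.eval (0 : ℚ) (fA a).num = 0) := by
  refine ⟨FASym.part1, ?_, ?_⟩
  · intro a ha
    obtain ⟨b, rfl⟩ : ∃ b, a = b + 1 := ⟨a - 1, by omega⟩
    exact FASym.inv_sym _ (FASym.inv_fA b)
  · intro a ha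
    obtain ⟨b, rfl⟩ : ∃ b, a = b + 1 := ⟨a - 1, by omega⟩
    exact FASym.inv_eval0 _ (FASym.inv_fA b)
end

section
/- For every integer a ≥ 0, the rational function (z−2)^{2a+1}·f_a(z) is a polynomial in ℚ[z] whose value at z = 2 is nonzero; that is, f_a has a pole only at z = 2, and this pole has order exactly 2a+1. -/
open scoped Polynomial

/-
The pole of `f_a` at `2` gains two orders per step: one from differentiating, one from the
factor `1/(z-2)`. Writing `(z-2)^n f = p`, the quotient rule gives
`(z-2)^{n+1} f' = (z-2) p' - n p`, whose value at `2` is `-n p(2)`; multiplying by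
`-z(z-1)` multiplies that value by `-2`, so it stays nonzero.
-/

open Polynomial

local notation "ι" => algebraMap ℚ[X] (RatFunc ℚ)

lemma ratFuncDeriv_eq_of_mul_eq {f : RatFunc ℚ} {P Q : ℚ[X]} (hQ : Q ≠ 0) (hf : f * ι Q = ι P) :
    ratFuncDeriv f = ι (derivative P * Q - P * derivative Q) / ι (Q ^ 2) := by
  have hnum : f * ι f.denom = ι f.num := by
    conv_rhs => rw [← div_mul_cancel₀ (ι f.num) (RatFunc.algebraMap_ne_zero f.denom_ne_zero),
      RatFunc.num_div_denom]
  have hcross : f.num * Q = P * f.denom := by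
    apply RatFunc.algebraMap_injective ℚ
    rw [map_mul, map_mul, ← hnum, ← hf]
    ring
  have hcross' : derivative f.num * Q + f.num * derivative Q =
      derivative P * f.denom + P * derivative f.denom := by
    simpa only [derivative_mul] using congrArg derivative hcross
  rw [ratFuncDeriv, div_eq_div_iff (RatFunc.algebraMap_ne_zero (pow_ne_zero 2 f.denom_ne_zero))
    (RatFunc.algebraMap_ne_zero (pow_ne_zero 2 hQ)), ← map_mul, ← map_mul]
  apply congrArg
  linear_combination (f.denom * Q) * hcross'
    - (derivative f.denom * Q + derivative Q * f.denom) * hcross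

lemma X_sub_C_pow_succ_mul_ratFuncDeriv {f : RatFunc ℚ} {P : ℚ[X]} (c : ℚ) (n : ℕ)
    (hf : ι ((X - C c) ^ n) * f = ι P) :
    ι ((X - C c) ^ (n + 1)) * ratFuncDeriv f = ι (derivative P * (X - C c) - C (n : ℚ) * P) := by
  have hQ : (X - C c) ^ n ≠ 0 := pow_ne_zero n (X_sub_C_ne_zero c)
  rw [ratFuncDeriv_eq_of_mul_eq hQ (by rwa [mul_comm]), derivative_X_sub_C_pow, mul_div_assoc']
  rw [div_eq_iff (RatFunc.algebraMap_ne_zero (pow_ne_zero 2 hQ)), ← map_mul, ← map_mul]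
  apply congrArg
  rcases n with _ | n <;> simp only [pow_zero, one_pow, mul_one, CharP.cast_eq_zero, C_0,
    zero_mul, sub_zero, Nat.add_sub_cancel, Nat.cast_add, Nat.cast_one] <;> ring

lemma eval_derivative_mul_X_sub_C_sub (P : ℚ[X]) (c : ℚ) (n : ℕ) :
    eval c (derivative P * (X - C c) - C (n : ℚ) * P) = -n * eval c P := by
  simp

lemma algebraMap_X_sub_two : ι (X - C 2) = RatFunc.X - 2 := by
  rw [map_sub, RatFunc.algebraMap_X, show C (2 : ℚ) = 2 from map_ofNat C 2, map_ofNat]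

lemma RatFunc.X_sub_two_ne_zero : (RatFunc.X - 2 : RatFunc ℚ) ≠ 0 := by
  rw [← algebraMap_X_sub_two]
  exact RatFunc.algebraMap_ne_zero (X_sub_C_ne_zero 2)

lemma X_sub_two_mul_fA_zero : ι (X - C 2) * fA 0 = ι (-2 * X + C 2) := by
  rw [algebraMap_X_sub_two, fA, mul_div_cancel₀ _ RatFunc.X_sub_two_ne_zero]
  rw [show C (2 : ℚ) = 2 from map_ofNat C 2]
  simp only [map_add, map_mul, map_neg, map_ofNat, RatFunc.algebraMap_X]
  ring

lemma X_sub_two_pow_add_two_mul_fA_succ {a n : ℕ} {p : ℚ[X]}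
    (hp : ι ((X - C 2) ^ n) * fA a = ι p) :
    ι ((X - C 2) ^ (n + 2)) * fA (a + 1) =
      ι (-(X * (X - 1)) * (derivative p * (X - C 2) - C (n : ℚ) * p)) := by
  have hX2 := RatFunc.X_sub_two_ne_zero
  rw [map_mul, ← X_sub_C_pow_succ_mul_ratFuncDeriv 2 n hp, fA, pow_succ, map_mul,
    algebraMap_X_sub_two]
  simp only [map_neg, map_mul, map_sub, map_one, RatFunc.algebraMap_X]
  field_simp

/-- For every `a ≥ 0`, `(z-2)^{2a+1} · f_a(z)` is a polynomial whose value at `z = 2` is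
nonzero; i.e. `f_a` has a pole only at `z = 2`, of order exactly `2a + 1`. -/
theorem fA_pole_order (a : ℕ) :
    ∃ p : Polynomial ℚ,
      algebraMap (Polynomial ℚ) (RatFunc ℚ) ((Polynomial.X - Polynomial.C 2) ^ (2 * a + 1)) *
          fA a = algebraMap (Polynomial ℚ) (RatFunc ℚ) p ∧
        Polynomial.eval (2 : ℚ) p ≠ 0 := by
  induction a with
  | zero => exact ⟨-2 * X + C 2, by simpa using X_sub_two_mul_fA_zero, by norm_num⟩
  | succ a ih =>
    obtain ⟨p, hp, hp2⟩ := ih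
    refine ⟨_, X_sub_two_pow_add_two_mul_fA_succ hp, ?_⟩
    rw [eval_mul, eval_derivative_mul_X_sub_C_sub]
    refine mul_ne_zero (by norm_num) (mul_ne_zero ?_ hp2)
    exact neg_ne_zero.mpr (Nat.cast_ne_zero.mpr (2 * a).succ_ne_zero)
end

section
/- For all integers d ≥ 1 and m ≥ 0, the number f(d,m) of monotone m-tuples of transpositions in S_d equals the Stirling number of the second kind S(d+m−1, d−1), i.e., the number of partitions of a set with d+m−1 elements into exactly d−1 nonempty blocks. -/
open scoped BigOperators

/-- A tuple `τ` of permutations is a monotone factorisation (tuple) if each `τ i` is a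
transposition `(aᵢ bᵢ)` with `aᵢ < bᵢ` and `b₁ ≤ b₂ ≤ ⋯ ≤ bₘ`. -/
def IsMonotoneFactorisation {d m : ℕ} (τ : Fin m → Equiv.Perm (Fin d)) : Prop :=
  ∃ a b : Fin m → Fin d,
    (∀ i, a i < b i) ∧ (∀ i, τ i = Equiv.swap (a i) (b i)) ∧ Monotone b

/-- A tuple `τ` of permutations is transitive if the subgroup it generates acts
transitively on `Fin d`. -/
def IsTransitiveFactorisation {d m : ℕ} (τ : Fin m → Equiv.Perm (Fin d)) : Prop :=
  ∀ x y : Fin d, ∃ π ∈ Subgroup.closure (Set.range τ), π x = y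

/-- `f(d, m)`: the number of monotone `m`-tuples of transpositions in `S_d`. -/
noncomputable def numMonotone (d m : ℕ) : ℕ :=
  Nat.card {τ : Fin m → Equiv.Perm (Fin d) // IsMonotoneFactorisation τ}

/-- `f°(d, m)`: the number of monotone transitive `m`-tuples of transpositions in `S_d`. -/
noncomputable def numMonotoneTransitive (d m : ℕ) : ℕ :=
  Nat.card {τ : Fin m → Equiv.Perm (Fin d) //
    IsMonotoneFactorisation τ ∧ IsTransitiveFactorisation τ}

/-- The Stirling number of the second kind `S(N, k)`: the number of partitions of an
`N`-element set into exactly `k` nonempty blocks. -/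
noncomputable def stirlingSecond (N k : ℕ) : ℕ :=
  Nat.card {S : Finset (Finset (Fin N)) //
    S.card = k ∧ (∀ B ∈ S, B.Nonempty) ∧ ∀ x : Fin N, ∃! B, B ∈ S ∧ x ∈ B}


lemma swap_pair_eq {n : ℕ} {a b c e : Fin n} (hab : a < b) (hce : c < e)
    (h : Equiv.swap a b = Equiv.swap c e) : a = c ∧ b = e := by
  have h1 : Equiv.swap a b c = e := by rw [h, Equiv.swap_apply_left]
  rcases eq_or_ne c a with h2 | h2
  · subst h2
    rw [Equiv.swap_apply_left] at h1
    exact ⟨rfl, h1⟩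
  · rcases eq_or_ne c b with h3 | h3
    · exfalso
      subst h3
      rw [Equiv.swap_apply_right] at h1
      subst h1
      exact absurd (hab.trans hce) (lt_irrefl _)
    · rw [Equiv.swap_apply_of_ne_of_ne h2 h3] at h1
      exact absurd (h1 ▸ hce) (lt_irrefl _)

def MTT (d m : ℕ) :=
  {p : Fin m → Fin d × Fin d // (∀ i, (p i).1 < (p i).2) ∧ Monotone fun i => (p i).2}

lemma numMonotone_eq (d m : ℕ) : numMonotone d m = Nat.card (MTT d m) := by
  refine (Nat.card_eq_of_bijective
    (fun p : MTT d m => (⟨fun i => Equiv.swap (p.1 i).1 (p.1 i).2,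
      fun i => (p.1 i).1, fun i => (p.1 i).2, p.2.1, fun i => rfl, p.2.2⟩ :
      {τ : Fin m → Equiv.Perm (Fin d) // IsMonotoneFactorisation τ})) ⟨?_, ?_⟩).symm
  · rintro ⟨p, hp1, hp2⟩ ⟨q, hq1, hq2⟩ h
    have h' := congrArg Subtype.val h
    refine Subtype.ext (funext fun i => ?_)
    have := congrFun h' i
    obtain ⟨e1, e2⟩ := swap_pair_eq (hp1 i) (hq1 i) this
    exact Prod.ext e1 e2
  · rintro ⟨τ, a, b, h1, h2, h3⟩
    exact ⟨⟨fun i => (a i, b i), h1, h3⟩, Subtype.ext (funext fun i => (h2 i).symm)⟩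

lemma numMonotone_zero (d : ℕ) : numMonotone d 0 = 1 := by
  rw [numMonotone, Nat.card_eq_one_iff_unique]
  constructor
  · constructor
    rintro ⟨τ, _⟩ ⟨σ, _⟩
    exact Subtype.ext (funext fun i => i.elim0)
  · exact ⟨fun i => i.elim0, fun i => i.elim0, fun i => i.elim0,
      fun i => i.elim0, fun i => i.elim0, fun i j _ => i.elim0⟩

lemma numMonotone_one (m : ℕ) : numMonotone 1 (m + 1) = 0 := by
  rw [numMonotone, Nat.card_eq_zero]
  left
  constructor
  rintro ⟨τ, a, b, h1, -⟩
  have := h1 0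
  omega
instance (d m : ℕ) : Finite (MTT d m) := Subtype.finite

/-- top-part equiv -/
noncomputable def eA (d m : ℕ) :
    {x : MTT (d + 2) (m + 1) // (x.1 (Fin.last m)).2 = Fin.last (d + 1)} ≃
      Fin (d + 1) × MTT (d + 2) m where
  toFun x :=
    ⟨Fin.castPred (x.1.1 (Fin.last m)).1
       (Fin.ne_last_of_lt (x.1.2.1 (Fin.last m))),
     ⟨fun i => x.1.1 i.castSucc,
      ⟨fun i => x.1.2.1 i.castSucc,
       fun i j hij => x.1.2.2 (Fin.castSucc_le_castSucc_iff.mpr hij)⟩⟩⟩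
  invFun yq :=
    ⟨⟨Fin.snoc yq.2.1 (yq.1.castSucc, Fin.last (d + 1)),
      ⟨by
        intro i
        refine Fin.lastCases ?_ (fun j => ?_) i
        · simp only [Fin.snoc_last]
          exact Fin.castSucc_lt_last _
        · simp only [Fin.snoc_castSucc]
          exact yq.2.2.1 j,
       by
        intro i j hij
        rcases Fin.eq_castSucc_or_eq_last j with ⟨j', rfl⟩ | rfl
        · rcases Fin.eq_castSucc_or_eq_last i with ⟨i', rfl⟩ | rfl
          · simp only [Fin.snoc_castSucc]
            exact yq.2.2.2 (Fin.castSucc_le_castSucc_iff.mp hij)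
          · exact absurd (lt_of_le_of_lt hij (Fin.castSucc_lt_last j'))
              (lt_irrefl _)
        · simp only [Fin.snoc_last]
          exact Fin.le_last _⟩⟩,
     by simp [Fin.snoc_last]⟩
  left_inv x := by
    refine Subtype.ext (Subtype.ext (funext fun i => ?_))
    refine Fin.lastCases ?_ (fun i' => ?_) i
    · simp only [Fin.snoc_last]
      refine Prod.ext ?_ ?_
      · simp [Fin.castSucc_castPred]
      · simp [x.2.symm]
    · simp [Fin.snoc_castSucc]
  right_inv yq := by
    refine Prod.ext ?_ (Subtype.ext (funext fun i => ?_))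
    · simp [Fin.snoc_last]
    · simp [Fin.snoc_castSucc]

/-- non-top-part equiv -/
noncomputable def eB (d m : ℕ) :
    {x : MTT (d + 2) (m + 1) // ¬ (x.1 (Fin.last m)).2 = Fin.last (d + 1)} ≃
      MTT (d + 1) (m + 1) where
  toFun x := by
    have hb : ∀ i, (x.1.1 i).2 ≠ Fin.last (d + 1) := by
      intro i
      have h1 : (x.1.1 i).2 ≤ (x.1.1 (Fin.last m)).2 := x.1.2.2 (Fin.le_last i)
      have h2 : (x.1.1 (Fin.last m)).2 < Fin.last (d + 1) :=
        Fin.lt_last_iff_ne_last.mpr x.2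
      exact Fin.ne_last_of_lt (lt_of_le_of_lt h1 h2)
    have ha : ∀ i, (x.1.1 i).1 ≠ Fin.last (d + 1) := fun i =>
      Fin.ne_last_of_lt (lt_of_lt_of_le (x.1.2.1 i) (Fin.lt_last_iff_ne_last.mpr (hb i)).le)
    exact ⟨fun i => ((x.1.1 i).1.castPred (ha i), (x.1.1 i).2.castPred (hb i)),
      fun i => (Fin.castPred_lt_castPred_iff (hi := ha i) (hj := hb i)).mpr (x.1.2.1 i),
      fun i j hij => (Fin.castPred_le_castPred_iff (hi := hb i) (hj := hb j)).mpr (x.1.2.2 hij)⟩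
  invFun q :=
    ⟨⟨fun i => ((q.1 i).1.castSucc, (q.1 i).2.castSucc),
      fun i => Fin.castSucc_lt_castSucc_iff.mpr (q.2.1 i),
      fun i j hij => Fin.castSucc_le_castSucc_iff.mpr (q.2.2 hij)⟩,
     Fin.ne_last_of_lt (Fin.castSucc_lt_last _)⟩
  left_inv x := by
    refine Subtype.ext (Subtype.ext (funext fun i => ?_))
    simp
  right_inv q := by
    refine Subtype.ext (funext fun i => ?_)
    simp

lemma mtt_rec (d m : ℕ) :
    Nat.card (MTT (d + 2) (m + 1)) =
      (d + 1) * Nat.card (MTT (d + 2) m) + Nat.card (MTT (d + 1) (m + 1)) := by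
  classical
  have e0 : MTT (d + 2) (m + 1) ≃
      {x : MTT (d + 2) (m + 1) // (x.1 (Fin.last m)).2 = Fin.last (d + 1)} ⊕
      {x : MTT (d + 2) (m + 1) // ¬ (x.1 (Fin.last m)).2 = Fin.last (d + 1)} :=
    (Equiv.sumCompl _).symm
  rw [Nat.card_congr e0, Nat.card_sum, Nat.card_congr (eA d m), Nat.card_congr (eB d m),
    Nat.card_prod, Nat.card_eq_fintype_card, Fintype.card_fin]
section Parts
variable {α : Type} [DecidableEq α]

def PartCond (k : ℕ) (S : Finset (Finset α)) : Prop :=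
  S.card = k ∧ (∀ B ∈ S, B.Nonempty) ∧ ∀ x : α, ∃! B, B ∈ S ∧ x ∈ B

lemma block_unique {k : ℕ} {S : Finset (Finset α)} (h : PartCond k S) {B C : Finset α}
    (hB : B ∈ S) (hC : C ∈ S) {x : α} (hxB : x ∈ B) (hxC : x ∈ C) : B = C :=
  (h.2.2 x).unique ⟨hB, hxB⟩ ⟨hC, hxC⟩

lemma partCond_image {β : Type} [DecidableEq β] (e : α ≃ β) {k : ℕ} {S : Finset (Finset α)}
    (h : PartCond k S) : PartCond k (S.image (Finset.image e)) := by
  refine ⟨?_, ?_, ?_⟩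
  · rw [Finset.card_image_of_injective _ (Finset.image_injective e.injective), h.1]
  · intro B hB
    obtain ⟨C, hC, rfl⟩ := Finset.mem_image.mp hB
    exact (h.2.1 C hC).image e
  · intro y
    obtain ⟨B, ⟨hB, hxB⟩, huniq⟩ := h.2.2 (e.symm y)
    refine ⟨B.image e, ⟨Finset.mem_image_of_mem _ hB, ?_⟩, ?_⟩
    · rw [Finset.mem_image]; exact ⟨_, hxB, e.apply_symm_apply y⟩
    · rintro C ⟨hC, hyC⟩
      obtain ⟨C', hC', rfl⟩ := Finset.mem_image.mp hC
      obtain ⟨x, hx, hex⟩ := Finset.mem_image.mp hyC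
      have hxe : x = e.symm y := by rw [← hex]; simp
      subst hxe
      rw [huniq C' ⟨hC', hx⟩]

noncomputable def partsCongr {β : Type} [DecidableEq β] (e : α ≃ β) (k : ℕ) :
    {S : Finset (Finset α) // PartCond k S} ≃ {S : Finset (Finset β) // PartCond k S} where
  toFun S := ⟨S.1.image (Finset.image e), partCond_image e S.2⟩
  invFun T := ⟨T.1.image (Finset.image e.symm), partCond_image e.symm T.2⟩
  left_inv S := by
    refine Subtype.ext ?_
    dsimp only
    rw [Finset.image_image]
    have h : ∀ B ∈ S.1, (Finset.image e.symm ∘ Finset.image e) B = id B := by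
      intro B _
      simp [Finset.image_image]
    rw [Finset.image_congr h, Finset.image_id]
  right_inv T := by
    refine Subtype.ext ?_
    dsimp only
    rw [Finset.image_image]
    have h : ∀ B ∈ T.1, (Finset.image e ∘ Finset.image e.symm) B = id B := by
      intro B _
      simp [Finset.image_image]
    rw [Finset.image_congr h, Finset.image_id]

end Parts

section Bases
variable (α : Type) [DecidableEq α]

set_option linter.unusedSectionVars false

lemma partCond_eq_singletons [Fintype α] {S : Finset (Finset α)}
    (h : PartCond (Fintype.card α) S) : S = Finset.univ.image (fun x : α => ({x} : Finset α)) := by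
  have hdisj : ∀ B ∈ S, ∀ C ∈ S, B ≠ C → Disjoint (id B) (id C) := by
    intro B hB C hC hne
    rw [Finset.disjoint_left]
    intro x hxB hxC
    exact hne (block_unique h hB hC hxB hxC)
  have hunion : S.biUnion id = Finset.univ := by
    ext x
    simp only [Finset.mem_biUnion, id, Finset.mem_univ, iff_true]
    obtain ⟨B, ⟨hB, hxB⟩, -⟩ := h.2.2 x
    exact ⟨B, hB, hxB⟩
  have hsum : ∑ B ∈ S, B.card = Fintype.card α := by
    have := Finset.card_biUnion hdisj
    rw [hunion, Finset.card_univ] at this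
    simpa using this.symm
  have hone : ∀ B ∈ S, B.card = 1 := by
    have hle : ∀ B ∈ S, 1 ≤ B.card := fun B hB => Finset.card_pos.mpr (h.2.1 B hB)
    have heq : ∑ B ∈ S, 1 = ∑ B ∈ S, B.card := by
      rw [hsum, ← h.1, Finset.card_eq_sum_ones]
    intro B hB
    exact ((Finset.sum_eq_sum_iff_of_le hle).mp heq B hB).symm
  ext B
  constructor
  · intro hB
    obtain ⟨b, rfl⟩ := Finset.card_eq_one.mp (hone B hB)
    exact Finset.mem_image.mpr ⟨b, Finset.mem_univ b, rfl⟩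
  · intro hB
    obtain ⟨x, -, rfl⟩ := Finset.mem_image.mp hB
    obtain ⟨C, ⟨hC, hxC⟩, -⟩ := h.2.2 x
    obtain ⟨c, rfl⟩ := Finset.card_eq_one.mp (hone C hC)
    have hxc : x = c := Finset.mem_singleton.mp hxC
    subst hxc
    exact hC

lemma parts_diag [Fintype α] :
    Nat.card {S : Finset (Finset α) // PartCond (Fintype.card α) S} = 1 := by
  rw [Nat.card_eq_one_iff_unique]
  constructor
  · exact ⟨fun S T => Subtype.ext (by rw [partCond_eq_singletons α S.2, partCond_eq_singletons α T.2])⟩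
  · refine ⟨Finset.univ.image (fun x : α => ({x} : Finset α)), ?_, ?_, ?_⟩
    · rw [Finset.card_image_of_injective _ Finset.singleton_injective, Finset.card_univ]
    · intro B hB
      obtain ⟨x, -, rfl⟩ := Finset.mem_image.mp hB
      exact Finset.singleton_nonempty x
    · intro x
      refine ⟨{x}, ⟨Finset.mem_image.mpr ⟨x, Finset.mem_univ x, rfl⟩, Finset.mem_singleton_self x⟩, ?_⟩
      rintro C ⟨hC, hxC⟩
      obtain ⟨y, -, rfl⟩ := Finset.mem_image.mp hC
      rw [Finset.mem_singleton.mp hxC]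

lemma parts_zero [Nonempty α] :
    Nat.card {S : Finset (Finset α) // PartCond 0 S} = 0 := by
  rw [Nat.card_eq_zero]
  left
  constructor
  rintro ⟨S, hS⟩
  obtain ⟨B, ⟨hB, -⟩, -⟩ := hS.2.2 (Classical.arbitrary α)
  rw [Finset.card_eq_zero.mp hS.1] at hB
  exact absurd hB (Finset.notMem_empty _)

end Bases
section OptionRec
variable {α : Type} [DecidableEq α]

lemma none_notin {k : ℕ} {S : Finset (Finset (Option α))} (h : PartCond k S)
    (h0 : ({none} : Finset (Option α)) ∈ S) {B : Finset (Option α)} (hB : B ∈ S)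
    (hBne : B ≠ {none}) : (none : Option α) ∉ B :=
  fun hx => hBne (block_unique h hB h0 hx (Finset.mem_singleton_self _))

lemma down_cond {k : ℕ} {S : Finset (Finset (Option α))} (h : PartCond (k + 1) S)
    (h0 : ({none} : Finset (Option α)) ∈ S) :
    PartCond k ((S.erase {none}).image Finset.eraseNone) := by
  have herase : ∀ B ∈ S.erase {none},
      Finset.map Function.Embedding.some (Finset.eraseNone B) = B := by
    intro B hB
    obtain ⟨hne, hBS⟩ := Finset.mem_erase.mp hB
    rw [Finset.map_some_eraseNone, Finset.erase_eq_of_notMem (none_notin h h0 hBS hne)]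
  refine ⟨?_, ?_, ?_⟩
  · have hinj : Set.InjOn Finset.eraseNone (S.erase {none} : Set (Finset (Option α))) := by
      intro B hB C hC heq
      rw [← herase B hB, ← herase C hC, heq]
    rw [Finset.card_image_of_injOn hinj, Finset.card_erase_of_mem h0, h.1]
    rfl
  · intro B' hB'
    obtain ⟨B, hB, rfl⟩ := Finset.mem_image.mp hB'
    obtain ⟨hne, hBS⟩ := Finset.mem_erase.mp hB
    obtain ⟨y, hy⟩ := h.2.1 B hBS
    match y with
    | none => exact absurd hy (none_notin h h0 hBS hne)
    | some a => exact ⟨a, Finset.mem_eraseNone.mpr hy⟩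
  · intro x
    obtain ⟨B, ⟨hB, hxB⟩, huniq⟩ := h.2.2 (some x)
    have hBne : B ≠ {none} := by
      rintro rfl
      simp at hxB
    refine ⟨Finset.eraseNone B,
      ⟨Finset.mem_image_of_mem _ (Finset.mem_erase.mpr ⟨hBne, hB⟩),
       Finset.mem_eraseNone.mpr hxB⟩, ?_⟩
    rintro C ⟨hC, hxC⟩
    obtain ⟨B', hB', rfl⟩ := Finset.mem_image.mp hC
    rw [huniq B' ⟨(Finset.mem_erase.mp hB').2, Finset.mem_eraseNone.mp hxC⟩]

lemma singleton_none_notin_image {k : ℕ} {T : Finset (Finset α)} (h : PartCond k T) :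
    ({none} : Finset (Option α)) ∉ T.image (Finset.map Function.Embedding.some) := by
  intro hmem
  obtain ⟨C, hC, hCeq⟩ := Finset.mem_image.mp hmem
  obtain ⟨a, ha⟩ := h.2.1 C hC
  have hmm : (some a : Option α) ∈ ({none} : Finset (Option α)) := by
    rw [← hCeq]
    exact Finset.mem_map_of_mem _ ha
  simp at hmm

lemma up_cond {k : ℕ} {T : Finset (Finset α)} (h : PartCond k T) :
    PartCond (k + 1) (insert ({none} : Finset (Option α))
      (T.image (Finset.map Function.Embedding.some))) := by
  refine ⟨?_, ?_, ?_⟩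
  · rw [Finset.card_insert_of_notMem (singleton_none_notin_image h),
      Finset.card_image_of_injective _ (Finset.map_injective _), h.1]
  · intro B hB
    rcases Finset.mem_insert.mp hB with rfl | hB
    · exact Finset.singleton_nonempty _
    · obtain ⟨C, hC, rfl⟩ := Finset.mem_image.mp hB
      exact (h.2.1 C hC).map
  · intro x
    match x with
    | none =>
      refine ⟨{none}, ⟨Finset.mem_insert_self _ _, Finset.mem_singleton_self _⟩, ?_⟩
      rintro C ⟨hC, hnC⟩
      rcases Finset.mem_insert.mp hC with rfl | hC
      · rfl
      · obtain ⟨C', _, rfl⟩ := Finset.mem_image.mp hC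
        obtain ⟨a, -, ha⟩ := Finset.mem_map.mp hnC
        simp at ha
    | some a =>
      obtain ⟨C, ⟨hC, haC⟩, huniq⟩ := h.2.2 a
      refine ⟨C.map Function.Embedding.some,
        ⟨Finset.mem_insert_of_mem (Finset.mem_image_of_mem _ hC),
         Finset.mem_map_of_mem _ haC⟩, ?_⟩
      rintro D ⟨hD, haD⟩
      rcases Finset.mem_insert.mp hD with rfl | hD
      · simp at haD
      · obtain ⟨D', hD', rfl⟩ := Finset.mem_image.mp hD
        obtain ⟨b, hb, hba⟩ := Finset.mem_map.mp haD
        have hab : b = a := by simpa using hba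
        subst hab
        rw [huniq D' ⟨hD', hb⟩]

noncomputable def eC (k : ℕ) :
    {S : Finset (Finset (Option α)) //
        PartCond (k + 1) S ∧ ({none} : Finset (Option α)) ∈ S} ≃
      {T : Finset (Finset α) // PartCond k T} where
  toFun S := ⟨(S.1.erase {none}).image Finset.eraseNone, down_cond S.2.1 S.2.2⟩
  invFun T := ⟨insert ({none} : Finset (Option α))
      (T.1.image (Finset.map Function.Embedding.some)),
    up_cond T.2, Finset.mem_insert_self _ _⟩
  left_inv S := by
    refine Subtype.ext ?_
    dsimp only
    rw [Finset.image_image]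
    have h : ∀ B ∈ S.1.erase {none},
        (Finset.map Function.Embedding.some ∘ Finset.eraseNone) B = id B := by
      intro B hB
      obtain ⟨hne, hBS⟩ := Finset.mem_erase.mp hB
      simp only [Function.comp_apply, id]
      rw [Finset.map_some_eraseNone,
        Finset.erase_eq_of_notMem (none_notin S.2.1 S.2.2 hBS hne)]
    rw [Finset.image_congr h, Finset.image_id, Finset.insert_erase S.2.2]
  right_inv T := by
    refine Subtype.ext ?_
    dsimp only
    rw [Finset.erase_insert (singleton_none_notin_image T.2), Finset.image_image]
    have h : ∀ C ∈ T.1, (Finset.eraseNone ∘ Finset.map Function.Embedding.some) C = id C := by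
      intro C _
      simp only [Function.comp_apply, id]
      ext a
      simp [Finset.mem_eraseNone]
    rw [Finset.image_congr h, Finset.image_id]

end OptionRec

section EDsec
variable {α : Type} [DecidableEq α]

lemma eraseNone_nonempty {k : ℕ} {S : Finset (Finset (Option α))} (h : PartCond k S)
    (h0 : ({none} : Finset (Option α)) ∉ S) {B : Finset (Option α)} (hB : B ∈ S) :
    (Finset.eraseNone B).Nonempty := by
  by_contra hne
  rw [Finset.not_nonempty_iff_eq_empty] at hne
  have hsub : B ⊆ {none} := by
    intro x hx
    match x with
    | none => exact Finset.mem_singleton_self _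
    | some a =>
      exact absurd (Finset.mem_eraseNone.mpr hx) (by rw [hne]; exact Finset.notMem_empty a)
  rcases Finset.subset_singleton_iff.mp hsub with rfl | rfl
  · exact absurd rfl (Finset.nonempty_iff_ne_empty.mp (h.2.1 _ hB))
  · exact h0 hB

lemma eraseNone_injOn {k : ℕ} {S : Finset (Finset (Option α))} (h : PartCond k S)
    (h0 : ({none} : Finset (Option α)) ∉ S) :
    Set.InjOn Finset.eraseNone (S : Set (Finset (Option α))) := by
  intro B hB C hC heq
  obtain ⟨a, ha⟩ := eraseNone_nonempty h h0 hB
  have haB : (some a : Option α) ∈ B := Finset.mem_eraseNone.mp ha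
  have haC : (some a : Option α) ∈ C := Finset.mem_eraseNone.mp (heq ▸ ha)
  exact block_unique h hB hC haB haC

lemma downD_cond {k : ℕ} {S : Finset (Finset (Option α))} (h : PartCond (k + 1) S)
    (h0 : ({none} : Finset (Option α)) ∉ S) :
    PartCond (k + 1) (S.image Finset.eraseNone) := by
  refine ⟨?_, ?_, ?_⟩
  · rw [Finset.card_image_of_injOn (eraseNone_injOn h h0), h.1]
  · intro B' hB'
    obtain ⟨B, hB, rfl⟩ := Finset.mem_image.mp hB'
    exact eraseNone_nonempty h h0 hB
  · intro x
    obtain ⟨B, ⟨hB, hxB⟩, huniq⟩ := h.2.2 (some x)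
    refine ⟨Finset.eraseNone B,
      ⟨Finset.mem_image_of_mem _ hB, Finset.mem_eraseNone.mpr hxB⟩, ?_⟩
    rintro C ⟨hC, hxC⟩
    obtain ⟨B', hB', rfl⟩ := Finset.mem_image.mp hC
    rw [huniq B' ⟨hB', Finset.mem_eraseNone.mp hxC⟩]

/-- the "lift back" function for eD -/
def fUp (B : Finset α) (C : Finset α) : Finset (Option α) :=
  if C = B then insert none (C.map Function.Embedding.some)
  else C.map Function.Embedding.some

lemma mem_fUp_none {B C : Finset α} : (none : Option α) ∈ fUp B C ↔ C = B := by
  unfold fUp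
  split_ifs with h
  · simp [h]
  · simp [h, Finset.mem_map]

lemma mem_fUp_some {B C : Finset α} {a : α} : (some a : Option α) ∈ fUp B C ↔ a ∈ C := by
  unfold fUp
  split_ifs with h <;> simp [Finset.mem_map]

lemma fUp_injective {B : Finset α} : Function.Injective (fUp B) := by
  intro C C' heq
  ext a
  rw [← mem_fUp_some (B := B), ← mem_fUp_some (B := B), heq]

lemma fUp_ne_singleton_none {k : ℕ} {T : Finset (Finset α)} (h : PartCond k T)
    {C : Finset α} (hC : C ∈ T) {B : Finset α} : fUp B C ≠ {none} := by
  intro heq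
  obtain ⟨a, ha⟩ := h.2.1 C hC
  have : (some a : Option α) ∈ ({none} : Finset (Option α)) :=
    heq ▸ mem_fUp_some.mpr ha
  simp at this

lemma upD_cond {k : ℕ} {T : Finset (Finset α)} (h : PartCond (k + 1) T)
    {B : Finset α} (hBT : B ∈ T) :
    PartCond (k + 1) (T.image (fUp B)) ∧ ({none} : Finset (Option α)) ∉ T.image (fUp B) := by
  constructor
  · refine ⟨?_, ?_, ?_⟩
    · rw [Finset.card_image_of_injective _ fUp_injective, h.1]
    · intro D hD
      obtain ⟨C, hC, rfl⟩ := Finset.mem_image.mp hD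
      obtain ⟨a, ha⟩ := h.2.1 C hC
      exact ⟨some a, mem_fUp_some.mpr ha⟩
    · intro x
      match x with
      | none =>
        refine ⟨fUp B B, ⟨Finset.mem_image_of_mem _ hBT, mem_fUp_none.mpr rfl⟩, ?_⟩
        rintro D ⟨hD, hnD⟩
        obtain ⟨C, hC, rfl⟩ := Finset.mem_image.mp hD
        rw [mem_fUp_none.mp hnD]
      | some a =>
        obtain ⟨C, ⟨hC, haC⟩, huniq⟩ := h.2.2 a
        refine ⟨fUp B C, ⟨Finset.mem_image_of_mem _ hC, mem_fUp_some.mpr haC⟩, ?_⟩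
        rintro D ⟨hD, haD⟩
        obtain ⟨C', hC', rfl⟩ := Finset.mem_image.mp hD
        rw [huniq C' ⟨hC', mem_fUp_some.mp haD⟩]
  · intro hmem
    obtain ⟨C, hC, heq⟩ := Finset.mem_image.mp hmem
    exact fUp_ne_singleton_none h hC heq

lemma sigma_helper {k : ℕ} {T T' : {T : Finset (Finset α) // PartCond (k + 1) T}}
    {B : {B // B ∈ T.1}} {B' : {B // B ∈ T'.1}} (h1 : T = T') (h2 : B.1 = B'.1) :
    (⟨T, B⟩ : Σ T : {T : Finset (Finset α) // PartCond (k + 1) T}, {B // B ∈ T.1}) =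
      ⟨T', B'⟩ := by
  subst h1
  exact congrArg _ (Subtype.ext h2)

noncomputable def eD (k : ℕ) :
    {S : Finset (Finset (Option α)) //
        PartCond (k + 1) S ∧ ({none} : Finset (Option α)) ∉ S} ≃
      Σ T : {T : Finset (Finset α) // PartCond (k + 1) T}, {B // B ∈ T.1} where
  toFun S :=
    ⟨⟨S.1.image Finset.eraseNone, downD_cond S.2.1 S.2.2⟩,
     ⟨Finset.eraseNone (S.2.1.2.2 none).exists.choose,
      Finset.mem_image_of_mem _ (S.2.1.2.2 none).exists.choose_spec.1⟩⟩
  invFun TB := ⟨TB.1.1.image (fUp TB.2.1),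
    (upD_cond TB.1.2 TB.2.2).1, (upD_cond TB.1.2 TB.2.2).2⟩
  left_inv S := by
    obtain ⟨S, hS, h0⟩ := S
    refine Subtype.ext ?_
    dsimp only
    rw [Finset.image_image]
    set B₀ := (hS.2.2 none).exists.choose with hB₀
    have hB₀S : B₀ ∈ S := (hS.2.2 none).exists.choose_spec.1
    have hnB₀ : (none : Option α) ∈ B₀ := (hS.2.2 none).exists.choose_spec.2
    have h : ∀ B₁ ∈ S, (fUp (Finset.eraseNone B₀) ∘ Finset.eraseNone) B₁ = id B₁ := by
      intro B₁ hB₁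
      simp only [Function.comp_apply, id]
      by_cases hcase : Finset.eraseNone B₁ = Finset.eraseNone B₀
      · have hBB : B₁ = B₀ := eraseNone_injOn hS h0 hB₁ hB₀S hcase
        subst hBB
        rw [fUp, if_pos rfl, Finset.map_some_eraseNone, Finset.insert_erase hnB₀]
      · have hnone : (none : Option α) ∉ B₁ := by
          intro hn
          exact hcase (congrArg _ (block_unique hS hB₁ hB₀S hn hnB₀))
        rw [fUp, if_neg hcase, Finset.map_some_eraseNone, Finset.erase_eq_of_notMem hnone]
    rw [Finset.image_congr h, Finset.image_id]
  right_inv TB := by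
    obtain ⟨⟨T, hT⟩, ⟨B, hB⟩⟩ := TB
    have hupd := upD_cond hT hB
    have hback : (T.image (fUp B)).image Finset.eraseNone = T := by
      rw [Finset.image_image]
      have h : ∀ C ∈ T, (Finset.eraseNone ∘ fUp B) C = id C := by
        intro C _
        simp only [Function.comp_apply, id]
        ext a
        rw [Finset.mem_eraseNone, mem_fUp_some]
      rw [Finset.image_congr h, Finset.image_id]
    refine sigma_helper (Subtype.ext hback) ?_
    dsimp only
    set S := T.image (fUp B) with hSdef
    have hex := ((upD_cond hT hB).1.2.2 none).exists
    have hch := hex.choose_spec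
    have hchoice : hex.choose = fUp B B :=
      block_unique (upD_cond hT hB).1 hch.1 (Finset.mem_image_of_mem _ hB)
        hch.2 (mem_fUp_none.mpr rfl)
    have : Finset.eraseNone (fUp B B) = B := by
      ext a
      rw [Finset.mem_eraseNone, mem_fUp_some]
    rw [hchoice, this]

end EDsec

set_option linter.unusedSectionVars false

lemma stirlingSecond_def (N k : ℕ) :
    stirlingSecond N k = Nat.card {S : Finset (Finset (Fin N)) // PartCond k S} := rfl

lemma parts_option_card (α : Type) [DecidableEq α] [Fintype α] (k : ℕ) :
    Nat.card {S : Finset (Finset (Option α)) // PartCond (k + 1) S} =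
      (k + 1) * Nat.card {T : Finset (Finset α) // PartCond (k + 1) T} +
        Nat.card {T : Finset (Finset α) // PartCond k T} := by
  classical
  have e0 : {S : Finset (Finset (Option α)) // PartCond (k + 1) S} ≃
      {S : Finset (Finset (Option α)) //
          PartCond (k + 1) S ∧ ({none} : Finset (Option α)) ∈ S} ⊕
      {S : Finset (Finset (Option α)) //
          PartCond (k + 1) S ∧ ({none} : Finset (Option α)) ∉ S} := by
    refine ((Equiv.sumCompl
      (fun x : {S : Finset (Finset (Option α)) // PartCond (k + 1) S} =>
        ({none} : Finset (Option α)) ∈ x.1)).symm).trans ?_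
    exact Equiv.sumCongr
      (Equiv.subtypeSubtypeEquivSubtypeInter
        (fun S : Finset (Finset (Option α)) => PartCond (k + 1) S)
        (fun S => ({none} : Finset (Option α)) ∈ S))
      (Equiv.subtypeSubtypeEquivSubtypeInter
        (fun S : Finset (Finset (Option α)) => PartCond (k + 1) S)
        (fun S => ({none} : Finset (Option α)) ∉ S))
  have eSig : (Σ T : {T : Finset (Finset α) // PartCond (k + 1) T}, {B // B ∈ T.1}) ≃
      {T : Finset (Finset α) // PartCond (k + 1) T} × Fin (k + 1) :=
    (Equiv.sigmaCongrRight fun T => T.1.equivFin.trans (finCongr T.2.1)).trans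
      (Equiv.sigmaEquivProd _ _)
  rw [Nat.card_congr e0, Nat.card_sum, Nat.card_congr (eC k),
    Nat.card_congr ((eD k).trans eSig), Nat.card_prod, Nat.card_eq_fintype_card (α := Fin (k+1)),
    Fintype.card_fin]
  ring

lemma stirling_rec (N k : ℕ) :
    stirlingSecond (N + 1) (k + 1) =
      (k + 1) * stirlingSecond N (k + 1) + stirlingSecond N k := by
  rw [stirlingSecond_def, stirlingSecond_def, stirlingSecond_def,
    Nat.card_congr (partsCongr (finSuccEquivLast (n := N)) (k + 1)),
    parts_option_card]

lemma stirling_diag (k : ℕ) : stirlingSecond k k = 1 := by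
  rw [stirlingSecond_def]
  have h := parts_diag (Fin k)
  rwa [Fintype.card_fin] at h

lemma stirling_zero (m : ℕ) : stirlingSecond (m + 1) 0 = 0 := by
  rw [stirlingSecond_def]
  exact parts_zero (Fin (m + 1))

lemma numMonotone_rec (d m : ℕ) :
    numMonotone (d + 2) (m + 1) =
      (d + 1) * numMonotone (d + 2) m + numMonotone (d + 1) (m + 1) := by
  rw [numMonotone_eq, numMonotone_eq, numMonotone_eq, mtt_rec]

lemma main_eq : ∀ m k : ℕ, numMonotone (k + 1) m = stirlingSecond (k + m) k := by
  intro m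
  induction m with
  | zero =>
    intro k
    rw [numMonotone_zero, Nat.add_zero, stirling_diag]
  | succ m ih =>
    intro k
    induction k with
    | zero =>
      rw [numMonotone_one, Nat.zero_add, stirling_zero]
    | succ k ihk =>
      have h1 : k + 1 + 1 = k + 2 := rfl
      rw [h1, numMonotone_rec, ih (k + 1), ihk]
      have h2 : k + 1 + (m + 1) = (k + (m + 1)) + 1 := by omega
      rw [h2, stirling_rec]
      have h3 : k + 1 + m = k + (m + 1) := by omega
      rw [h3]

/-- `f(d, m) = S(d + m - 1, d - 1)` for `d ≥ 1`, `m ≥ 0`. -/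
theorem numMonotone_eq_stirling (d m : ℕ) (hd : 1 ≤ d) :
    numMonotone d m = stirlingSecond (d + m - 1) (d - 1) := by
  obtain ⟨k, rfl⟩ : ∃ k, d = k + 1 := ⟨d - 1, by omega⟩
  have h1 : k + 1 + m - 1 = k + m := by omega
  have h2 : k + 1 - 1 = k := by omega
  rw [h1, h2]
  exact main_eq m k
end
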